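/- arXiv:1001.2194 — 2 statements merged into one kernel-verified Lean document; each statement's English description precedes it below -/
import Mathlib

section
/- Let A be the algebra with basis e₁,…,eₙ, e_i·e_j = e_{max(i,j)}, and Δ as above. Then Δ is an algebra homomorphism: Δ(e_i·e_j) = Δ(e_i)•Δ(e_j) where • is the componentwise product on A⊗A. In particular, for i ≥ k, Δ(e_i)•Δ(e_k) = Δ(e_i). -/
open TensorProduct

noncomputable def maxBasis (K : Type*) [Field K] (n : ℕ) (i : Fin n) : Fin n → K :=
  fun j => if i ≤ j then 1 else 0

noncomputable def orthIdem (K : Type*) [Field K] (n : ℕ) (i : Fin n) : Fin n → K :=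
  if h : i.val + 1 < n then maxBasis K n i - maxBasis K n ⟨i.val + 1, h⟩
  else maxBasis K n i

noncomputable def maxComulBasis (K : Type*) [Field K] (n : ℕ) (i : Fin n) :
    (Fin n → K) ⊗[K] (Fin n → K) :=
  ∑ k ∈ Finset.univ.filter (fun k => i ≤ k), (orthIdem K n k) ⊗ₜ[K] (orthIdem K n k)

noncomputable def maxComul (K : Type*) [Field K] (n : ℕ) :
    (Fin n → K) →ₗ[K] (Fin n → K) ⊗[K] (Fin n → K) :=
  ∑ k : Fin n,
    (LinearMap.proj k : (Fin n → K) →ₗ[K] K).smulRight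
      ((orthIdem K n k) ⊗ₜ[K] (orthIdem K n k))

lemma orthIdem_eq (K : Type*) [Field K] (n : ℕ) (k : Fin n) :
    orthIdem K n k = fun j => if k = j then (1 : K) else 0 := by
  funext j
  by_cases h : k.val + 1 < n
  · rw [orthIdem, dif_pos h]
    show (if k ≤ j then (1:K) else 0) - (if (⟨k.val+1,h⟩ : Fin n) ≤ j then (1:K) else 0) = _
    have hle : (⟨k.val + 1, h⟩ : Fin n) ≤ j ↔ k < j := Iff.rfl
    rw [if_congr hle rfl rfl]
    rcases lt_trichotomy k j with h1 | h1 | h1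
    · rw [if_pos h1.le, if_pos h1, if_neg h1.ne]; ring
    · subst h1; simp
    · rw [if_neg (not_le.mpr h1), if_neg (asymm h1), if_neg (ne_of_gt h1)]; ring
  · rw [orthIdem, dif_neg h]
    show (if k ≤ j then (1:K) else 0) = _
    push_neg at h
    have : k ≤ j ↔ k = j := by
      rw [Fin.le_def, Fin.ext_iff]; have := j.isLt; omega
    rw [if_congr this rfl rfl]

lemma orthIdem_mul (K : Type*) [Field K] (n : ℕ) (k l : Fin n) :
    orthIdem K n k * orthIdem K n l = if k = l then orthIdem K n k else 0 := by
  by_cases h : k = l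
  · subst h; rw [if_pos rfl]
    conv_lhs => rw [orthIdem_eq]
    conv_rhs => rw [orthIdem_eq]
    funext j; simp only [Pi.mul_apply]; split_ifs <;> simp
  · rw [if_neg h, orthIdem_eq, orthIdem_eq]
    funext j; simp only [Pi.mul_apply, Pi.zero_apply]
    split_ifs <;> simp_all

lemma comul_basis (K : Type*) [Field K] (n : ℕ) (i : Fin n) :
    maxComul K n (maxBasis K n i) = maxComulBasis K n i := by
  unfold maxComul maxComulBasis
  rw [LinearMap.sum_apply, Finset.sum_filter]
  refine Finset.sum_congr rfl fun k _ => ?_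
  rw [LinearMap.smulRight_apply, LinearMap.proj_apply]
  show (maxBasis K n i k) • _ = _
  unfold maxBasis
  split_ifs <;> simp

lemma basis_mul (K : Type*) [Field K] (n : ℕ) (i j : Fin n) :
    maxBasis K n i * maxBasis K n j = maxBasis K n (max i j) := by
  funext l
  show (if i ≤ l then (1:K) else 0) * (if j ≤ l then (1:K) else 0)
      = if max i j ≤ l then 1 else 0
  simp only [max_le_iff]
  split_ifs <;> simp_all

lemma comul_mul (K : Type*) [Field K] (n : ℕ) (i j : Fin n) :
    maxComul K n (maxBasis K n i) * maxComul K n (maxBasis K n j)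
      = maxComul K n (maxBasis K n (max i j)) := by
  rw [comul_basis, comul_basis, comul_basis]
  unfold maxComulBasis
  rw [Finset.sum_mul_sum]
  rw [Finset.sum_sigma']
  rw [← Finset.sum_filter_add_sum_filter_not _ (fun p : (_ : Fin n) × Fin n => p.1 = p.2)]
  have h2 : ∀ p ∈ (((Finset.univ.filter (fun k => i ≤ k)).sigma
      (fun _ => Finset.univ.filter (fun k => j ≤ k))).filter
      (fun p : (_ : Fin n) × Fin n => ¬ p.1 = p.2)),
      orthIdem K n p.1 ⊗ₜ[K] orthIdem K n p.1 * orthIdem K n p.2 ⊗ₜ[K] orthIdem K n p.2 = 0 := by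
    intro p hp
    simp only [Finset.mem_filter] at hp
    rw [Algebra.TensorProduct.tmul_mul_tmul, orthIdem_mul, if_neg hp.2]
    simp
  rw [Finset.sum_congr rfl h2, Finset.sum_const_zero, add_zero]
  refine Finset.sum_bij' (fun p _ => p.1) (fun k _ => ⟨k, k⟩) ?_ ?_ ?_ ?_ ?_
  · intro p hp
    simp only [Finset.mem_filter, Finset.mem_sigma, Finset.mem_univ, true_and] at hp ⊢
    obtain ⟨⟨h1, h3⟩, h4⟩ := hp
    exact max_le h1 (h4 ▸ h3)
  · intro k hk
    simp only [Finset.mem_filter, Finset.mem_sigma, Finset.mem_univ, true_and,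
      max_le_iff] at hk ⊢
    exact ⟨⟨hk.1, hk.2⟩, trivial⟩
  · intro p hp
    obtain ⟨a, b⟩ := p
    simp only [Finset.mem_filter] at hp
    cases hp.2; rfl
  · intro k _; rfl
  · intro p hp
    simp only [Finset.mem_filter] at hp
    rw [Algebra.TensorProduct.tmul_mul_tmul, orthIdem_mul, if_pos hp.2]


/-- `Δ` is an algebra homomorphism, `Δ(e_i·e_j) = Δ(e_i)•Δ(e_j)`;
in particular, for `i ≥ k`, `Δ(e_i)•Δ(e_k) = Δ(e_i)`. -/
theorem stmt10 (K : Type*) [Field K] (n : ℕ) [NeZero n] :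
    (∀ i : Fin n, maxComul K n (maxBasis K n i) = maxComulBasis K n i)
    ∧ (∀ i j : Fin n, maxBasis K n i * maxBasis K n j = maxBasis K n (max i j))
    ∧ (∀ i j : Fin n,
        maxComul K n (maxBasis K n i * maxBasis K n j)
          = maxComul K n (maxBasis K n i) * maxComul K n (maxBasis K n j))
    ∧ (∀ i k : Fin n, k ≤ i →
        maxComul K n (maxBasis K n i) * maxComul K n (maxBasis K n k)
          = maxComul K n (maxBasis K n i)) := by
  refine ⟨comul_basis K n, basis_mul K n, fun i j => ?_, fun i k h => ?_⟩
  · rw [basis_mul, comul_mul]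
  · rw [comul_mul, max_eq_left h]
end

section
/- Let A be the algebra with basis e₁,…,eₙ, e_i·e_j = e_{max(i,j)}, with Δ as above and S = id. Then the third antipode axiom holds: m(m⊗id)(S⊗id⊗S)(Δ⊗id)Δ(e_i) = e_i for all i. -/
open TensorProduct

lemma orthIdem_apply (K : Type*) [Field K] (n : ℕ) (k j : Fin n) :
    orthIdem K n k j = if j = k then 1 else 0 := by
  unfold orthIdem maxBasis
  have hj := j.isLt
  by_cases h : k.val + 1 < n
  · rw [dif_pos h]
    simp only [Pi.sub_apply, Fin.le_def, Fin.ext_iff]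
    split_ifs <;> (first | omega | simp)
  · rw [dif_neg h]
    simp only [Fin.le_def, Fin.ext_iff]
    split_ifs <;> (first | omega | simp)

lemma orthIdem_mul_self (K : Type*) [Field K] (n : ℕ) (k : Fin n) :
    orthIdem K n k * orthIdem K n k = orthIdem K n k := by
  funext j
  simp only [Pi.mul_apply, orthIdem_apply]
  split_ifs <;> simp

lemma maxComul_orthIdem (K : Type*) [Field K] (n : ℕ) (k : Fin n) :
    maxComul K n (orthIdem K n k) = (orthIdem K n k) ⊗ₜ[K] (orthIdem K n k) := by
  simp only [maxComul, LinearMap.sum_apply, LinearMap.smulRight_apply,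
    LinearMap.proj_apply, orthIdem_apply]
  rw [Finset.sum_eq_single k]
  · simp
  · intro l _ hl
    rw [if_neg (by simpa [eq_comm] using hl), zero_smul]
  · simp

lemma sum_orthIdem (K : Type*) [Field K] (n : ℕ) (i : Fin n) :
    ∑ k ∈ Finset.univ.filter (fun k => i ≤ k), orthIdem K n k = maxBasis K n i := by
  funext j
  rw [Finset.sum_apply]
  simp only [orthIdem_apply, maxBasis]
  rw [Finset.sum_ite_eq (Finset.univ.filter (fun k => i ≤ k)) j (fun _ => (1:K))]
  simp

/-- third antipode axiom with `S = id`: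
`m(m⊗id)(S⊗id⊗S)(Δ⊗id)Δ(e_i) = e_i` for all `i`. -/
theorem stmt13 (K : Type*) [Field K] [CharZero K] (n : ℕ) [NeZero n]
    (S : (Fin n → K) →ₗ[K] (Fin n → K)) (hS : S = LinearMap.id) :
    (∀ i : Fin n, maxComul K n (maxBasis K n i) = maxComulBasis K n i)
    ∧ (∀ i : Fin n,
        LinearMap.mul' K (Fin n → K)
          (TensorProduct.map (LinearMap.mul' K (Fin n → K)) LinearMap.id
            (TensorProduct.map (TensorProduct.map S LinearMap.id) S
              (TensorProduct.map (maxComul K n) LinearMap.id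
                (maxComul K n (maxBasis K n i)))))
          = maxBasis K n i) := by
  have hΔ : ∀ i : Fin n, maxComul K n (maxBasis K n i) = maxComulBasis K n i := by
    intro i
    simp only [maxComul, maxComulBasis, LinearMap.sum_apply, LinearMap.smulRight_apply,
      LinearMap.proj_apply, maxBasis, Finset.sum_filter]
    refine Finset.sum_congr rfl fun k _ => ?_
    split_ifs <;> simp
  refine ⟨hΔ, fun i => ?_⟩
  rw [hΔ, hS, maxComulBasis]
  rw [map_sum, map_sum, map_sum, map_sum]
  have : ∀ k ∈ Finset.univ.filter (fun k => i ≤ k),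
      LinearMap.mul' K (Fin n → K)
        (TensorProduct.map (LinearMap.mul' K (Fin n → K)) LinearMap.id
          (TensorProduct.map (TensorProduct.map LinearMap.id LinearMap.id) LinearMap.id
            (TensorProduct.map (maxComul K n) LinearMap.id
              ((orthIdem K n k) ⊗ₜ[K] (orthIdem K n k))))) = orthIdem K n k := by
    intro k _
    rw [TensorProduct.map_tmul, maxComul_orthIdem]
    simp only [TensorProduct.map_tmul, LinearMap.id_apply, LinearMap.mul'_apply,
      orthIdem_mul_self]
  rw [Finset.sum_congr rfl this, sum_orthIdem]
end
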